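/- Let U ⊆ ℂ be a nonempty connected open set, let q : U → ℂ be analytic, and let y₀, y₁ : U → ℂ be analytic solutions of y″ + q·y = 0 on U such that y₀ is nonvanishing on U and the Wronskian y₀·y₁′ − y₁·y₀′ is nonzero at some point of U. Then the quotient ω = y₁/y₀ is analytic on U with ω′ nonvanishing, and its Schwarzian derivative satisfies S(ω) = 2q on U. -/

import Mathlib

/-!
For solutions of `y″ + q y = 0` the Wronskian `W = y₀ y₁′ − y₁ y₀′` has derivative
`y₀ y₁″ − y₁ y₀″ = 0`, so it is a nonzero constant `c` on the connected set `U`.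
Hence `ω′ = W / y₀² = c / y₀²`, and differentiating twice more shows that any `ω` with
`ω′ = c / g²` has `S(ω) = −2 g″ / g`; for `g = y₀` this is `2q`.
-/

noncomputable def schwarzian (f : ℂ → ℂ) (z : ℂ) : ℂ :=
  deriv (deriv (deriv f)) z / deriv f z - (3 / 2) * (deriv (deriv f) z / deriv f z) ^ 2

open Filter Topology

section Wronskian

variable {𝕜 : Type*} [NontriviallyNormedField 𝕜]

noncomputable def wronskian (y₀ y₁ : 𝕜 → 𝕜) (x : 𝕜) : 𝕜 :=
  y₀ x * deriv y₁ x - y₁ x * deriv y₀ x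

theorem hasDerivAt_wronskian {y₀ y₁ : 𝕜 → 𝕜} {x : 𝕜}
    (h₀ : DifferentiableAt 𝕜 y₀ x) (h₁ : DifferentiableAt 𝕜 y₁ x)
    (h₀' : DifferentiableAt 𝕜 (deriv y₀) x) (h₁' : DifferentiableAt 𝕜 (deriv y₁) x) :
    HasDerivAt (wronskian y₀ y₁)
      (y₀ x * deriv (deriv y₁) x - y₁ x * deriv (deriv y₀) x) x :=
  ((h₀.hasDerivAt.fun_mul h₁'.hasDerivAt).fun_sub
    (h₁.hasDerivAt.fun_mul h₀'.hasDerivAt)).congr_deriv (by ring)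

theorem deriv_div_eq_wronskian_div_sq {y₀ y₁ : 𝕜 → 𝕜} {x : 𝕜}
    (h₀ : DifferentiableAt 𝕜 y₀ x) (h₁ : DifferentiableAt 𝕜 y₁ x) (hx : y₀ x ≠ 0) :
    deriv (fun x => y₁ x / y₀ x) x = wronskian y₀ y₁ x / y₀ x ^ 2 := by
  rw [(h₁.hasDerivAt.fun_div h₀.hasDerivAt hx).deriv, wronskian]
  ring

end Wronskian

theorem wronskian_eq_of_isPreconnected {𝕜 : Type*} [RCLike 𝕜] {U : Set 𝕜} (hU : IsOpen U)
    (hUc : IsPreconnected U) {q y₀ y₁ : 𝕜 → 𝕜}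
    (hy₀ : DifferentiableOn 𝕜 y₀ U) (hy₁ : DifferentiableOn 𝕜 y₁ U)
    (hy₀' : DifferentiableOn 𝕜 (deriv y₀) U) (hy₁' : DifferentiableOn 𝕜 (deriv y₁) U)
    (hode₀ : ∀ x ∈ U, deriv (deriv y₀) x + q x * y₀ x = 0)
    (hode₁ : ∀ x ∈ U, deriv (deriv y₁) x + q x * y₁ x = 0)
    {x x₀ : 𝕜} (hx : x ∈ U) (hx₀ : x₀ ∈ U) :
    wronskian y₀ y₁ x = wronskian y₀ y₁ x₀ := by
  have hW : ∀ x ∈ U, HasDerivAt (wronskian y₀ y₁) 0 x := fun x hx => by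
    have hUx := hU.mem_nhds hx
    have h := hasDerivAt_wronskian (hy₀.differentiableAt hUx) (hy₁.differentiableAt hUx)
      (hy₀'.differentiableAt hUx) (hy₁'.differentiableAt hUx)
    convert h using 1
    linear_combination y₁ x * hode₀ x hx - y₀ x * hode₁ x hx
  exact hU.is_const_of_deriv_eq_zero hUc
    (fun x hx => (hW x hx).differentiableAt.differentiableWithinAt)
    (fun x hx => (hW x hx).deriv) hx hx₀

theorem schwarzian_eq_of_deriv_eventuallyEq {f g : ℂ → ℂ} {c x : ℂ} (hc : c ≠ 0)
    (hf : deriv f =ᶠ[𝓝 x] fun y => c / g y ^ 2) (hg : ∀ᶠ y in 𝓝 x, DifferentiableAt ℂ g y)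
    (hg' : DifferentiableAt ℂ (deriv g) x) (hgx : g x ≠ 0) :
    schwarzian f x = -2 * deriv (deriv g) x / g x := by
  have hg₀ : ∀ᶠ y in 𝓝 x, g y ≠ 0 := hg.self_of_nhds.continuousAt.eventually_ne hgx
  have hf₂ : deriv (deriv f) =ᶠ[𝓝 x] fun y => -2 * c * deriv g y / g y ^ 3 := by
    filter_upwards [hf.eventuallyEq_nhds, hg, hg₀] with y hfy hgy hgy₀
    rw [hfy.deriv_eq,
      ((hasDerivAt_const y c).fun_div (hgy.hasDerivAt.fun_pow 2) (pow_ne_zero 2 hgy₀)).deriv]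
    field_simp
    ring
  have hf₃ : deriv (deriv (deriv f)) x =
      -2 * c * (deriv (deriv g) x * g x - 3 * deriv g x ^ 2) / g x ^ 4 := by
    rw [hf₂.deriv_eq, ((hg'.hasDerivAt.const_mul (-2 * c)).fun_div
      (hg.self_of_nhds.hasDerivAt.fun_pow 3) (pow_ne_zero 3 hgx)).deriv]
    field_simp
    ring
  rw [schwarzian, hf.self_of_nhds, hf₂.self_of_nhds, hf₃]
  field_simp
  ring

theorem schwarzian_of_solution_quotient_general (U : Set ℂ) (hU : IsOpen U)
    (hUc : IsConnected U) (q y₀ y₁ : ℂ → ℂ)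
    (hy₀ : AnalyticOnNhd ℂ y₀ U) (hy₁ : AnalyticOnNhd ℂ y₁ U)
    (hode₀ : ∀ x ∈ U, deriv (deriv y₀) x + q x * y₀ x = 0)
    (hode₁ : ∀ x ∈ U, deriv (deriv y₁) x + q x * y₁ x = 0)
    (hy₀ne : ∀ x ∈ U, y₀ x ≠ 0)
    (hW : ∃ x ∈ U, y₀ x * deriv y₁ x - y₁ x * deriv y₀ x ≠ 0) :
    AnalyticOnNhd ℂ (fun x => y₁ x / y₀ x) U ∧
      (∀ x ∈ U, deriv (fun x => y₁ x / y₀ x) x ≠ 0) ∧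
      (∀ x ∈ U, schwarzian (fun x => y₁ x / y₀ x) x = 2 * q x) := by
  obtain ⟨x₀, hx₀, hWx₀⟩ := hW
  have hderiv : ∀ x ∈ U, deriv (fun x => y₁ x / y₀ x) x = wronskian y₀ y₁ x₀ / y₀ x ^ 2 :=
    fun x hx => by
      rw [deriv_div_eq_wronskian_div_sq (hy₀ x hx).differentiableAt (hy₁ x hx).differentiableAt
        (hy₀ne x hx), wronskian_eq_of_isPreconnected hU hUc.isPreconnected
        hy₀.differentiableOn hy₁.differentiableOn hy₀.deriv.differentiableOn
        hy₁.deriv.differentiableOn hode₀ hode₁ hx hx₀]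
  refine ⟨hy₁.div hy₀ hy₀ne, fun x hx => ?_, fun x hx => ?_⟩
  · rw [hderiv x hx]
    exact div_ne_zero hWx₀ (pow_ne_zero 2 (hy₀ne x hx))
  · rw [schwarzian_eq_of_deriv_eventuallyEq hWx₀ (eventually_of_mem (hU.mem_nhds hx) hderiv)
      (eventually_of_mem (hU.mem_nhds hx) fun y hy => (hy₀ y hy).differentiableAt)
      (hy₀.deriv x hx).differentiableAt (hy₀ne x hx)]
    field_simp [hy₀ne x hx]
    linear_combination -hode₀ x hx

/-- The quotient `ω = y₁/y₀` of two independent analytic solutions of `y″ + qy = 0`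
(with `y₀` nonvanishing) has nonvanishing derivative and satisfies `S(ω) = 2q`. -/
theorem schwarzian_of_solution_quotient (U : Set ℂ) (hU : IsOpen U) (hUne : U.Nonempty)
    (hUc : IsConnected U) (q y₀ y₁ : ℂ → ℂ)
    (hq : AnalyticOnNhd ℂ q U)
    (hy₀ : AnalyticOnNhd ℂ y₀ U) (hy₁ : AnalyticOnNhd ℂ y₁ U)
    (hode₀ : ∀ x ∈ U, deriv (deriv y₀) x + q x * y₀ x = 0)
    (hode₁ : ∀ x ∈ U, deriv (deriv y₁) x + q x * y₁ x = 0)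
    (hy₀ne : ∀ x ∈ U, y₀ x ≠ 0)
    (hW : ∃ x ∈ U, y₀ x * deriv y₁ x - y₁ x * deriv y₀ x ≠ 0) :
    AnalyticOnNhd ℂ (fun x => y₁ x / y₀ x) U ∧
      (∀ x ∈ U, deriv (fun x => y₁ x / y₀ x) x ≠ 0) ∧
      (∀ x ∈ U, schwarzian (fun x => y₁ x / y₀ x) x = 2 * q x) :=
  schwarzian_of_solution_quotient_general U hU hUc q y₀ y₁ hy₀ hy₁ hode₀ hode₁ hy₀ne hW
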